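/- There is an absolute constant C such that for all integers d ≥ 2, m ≥ 2, every d-tuple I = I_0×⋯×I_{d−1} of nonempty integer intervals with each I_j ⊆ [−m,m], every prime p, every integer k ≥ 1 and every integer r, one has | #{f ∈ E^{(1)}(m,d,I) : f(r) ≡ 0 (mod p^k)} − |I|/p^k | ≤ C·d·|I|/min_j #I_j, where |I| = ∏_j #I_j. -/

import Mathlib

/-!
Write a coefficient tuple as its constant term `x` followed by the tail `t`. For fixed `t` the
polynomial is `W + x` with `W` fixed, so `p^k ∣ f(r)` is a congruence condition on `x`, met by
`#I₀ / p^k` points of the interval `I₀` up to an error of at most `1`. The discriminant of `W + x`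
vanishes only if `W + x` and `W'` have a common complex root `z`, which forces `x = -W(z)`; since
`W'` has at most `d - 1` roots, at most `d - 1` values of `x` are lost. Summing the error `d` over
the `|I| / #I₀` tails gives `d |I| / #I₀ ≤ d |I| / min_j #I_j`, so `C = 1` works.
-/

open Polynomial Finset in
/-- The binary form associated to an integer polynomial `f`. -/
noncomputable def binForm (f : Polynomial ℤ) (x y : ℤ) : ℤ :=
  ∑ i ∈ Finset.range (f.natDegree + 1), f.coeff i * x ^ i * y ^ (f.natDegree - i)

open scoped Classical in
/-- `n_{p^k}(f)`. -/
noncomputable def nRoots (f : Polynomial ℤ) (p k : ℕ) : ℕ :=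
  ((Finset.range (p ^ k)).filter fun a => (p : ℤ) ^ k ∣ f.eval (a : ℤ)).card +
  ((Finset.range (p ^ k)).filter fun b => p ∣ b ∧ (p : ℤ) ^ k ∣ binForm f 1 (b : ℤ)).card

/-- The Sylvester matrix of two integer polynomials. -/
noncomputable def sylvesterMatrix (f g : Polynomial ℤ) :
    Matrix (Fin (f.natDegree + g.natDegree)) (Fin (f.natDegree + g.natDegree)) ℤ :=
  Matrix.of fun i j =>
    if (i : ℕ) < g.natDegree then
      if (i : ℕ) ≤ (j : ℕ) ∧ (j : ℕ) ≤ (i : ℕ) + f.natDegree then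
        f.coeff (f.natDegree + i - j)
      else 0
    else
      if (i : ℕ) - g.natDegree ≤ (j : ℕ) ∧ (j : ℕ) ≤ (i : ℕ) - g.natDegree + g.natDegree then
        g.coeff (g.natDegree + ((i : ℕ) - g.natDegree) - j)
      else 0

/-- The resultant of two integer polynomials. -/
noncomputable def resultant (f g : Polynomial ℤ) : ℤ := (sylvesterMatrix f g).det

/-- The discriminant of an integer polynomial. -/
noncomputable def disc (f : Polynomial ℤ) : ℤ :=
  ((-1) ^ (f.natDegree * (f.natDegree - 1) / 2) *
    resultant f (Polynomial.derivative f)) / f.leadingCoeff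

/-- Murphy's `α_p(f)`. -/
noncomputable def alphaP (f : Polynomial ℤ) (p : ℕ) : ℝ :=
  Real.log p * (1 / ((p : ℝ) - 1) -
    ((p : ℝ) / ((p : ℝ) + 1)) * ∑' k : ℕ, (nRoots f p (k + 1) : ℝ) / (p : ℝ) ^ (k + 1))

/-- The monic integer polynomial `X^d + Σ_{i<d} c_i X^i`. -/
noncomputable def monicPoly (d : ℕ) (c : Fin d → ℤ) : Polynomial ℤ :=
  Polynomial.X ^ d + ∑ i : Fin d, Polynomial.C (c i) * Polynomial.X ^ (i : ℕ)

open scoped Classical in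
/-- The set `E^{(1)}(m,d,I)` of (coefficient tuples of) monic polynomials of degree `d` with
`i`-th coefficient in the interval `[lo i, hi i]` and nonzero discriminant. -/
noncomputable def Eset (d : ℕ) (lo hi : Fin d → ℤ) : Finset (Fin d → ℤ) :=
  (Fintype.piFinset fun j => Finset.Icc (lo j) (hi j)).filter
    fun c => disc (monicPoly d c) ≠ 0

open Polynomial hiding resultant
open Finset

theorem sylvesterMatrix_eq_transpose_sylvester (f g : ℤ[X]) :
    sylvesterMatrix f g =
      ((Polynomial.sylvester f g f.natDegree g.natDegree).submatrix Fin.rev Fin.rev).transpose := by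
  ext i j
  simp only [sylvesterMatrix, Polynomial.sylvester, Matrix.transpose_apply, Matrix.submatrix_apply,
    Matrix.of_apply]
  by_cases hi : (i : ℕ) < g.natDegree
  · have hrev : Fin.rev i = Fin.natAdd _ ⟨g.natDegree - 1 - i, by omega⟩ := by
      ext
      simp only [Fin.val_rev, Fin.val_natAdd]
      omega
    rw [hrev, Fin.addCases_right, if_pos hi]
    simp only [Fin.val_rev, Set.mem_Icc]
    split_ifs <;> first | rfl | (congr 1; omega)
  · have hrev : Fin.rev i = Fin.castAdd _ ⟨f.natDegree - 1 - (i - g.natDegree), by omega⟩ := by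
      ext
      simp only [Fin.val_rev, Fin.val_castAdd]
      omega
    rw [hrev, Fin.addCases_left, if_neg hi]
    simp only [Fin.val_rev, Set.mem_Icc]
    split_ifs <;> first | rfl | (congr 1; omega)

theorem resultant_eq_polynomial_resultant (f g : ℤ[X]) :
    resultant f g = Polynomial.resultant f g := by
  rw [resultant, sylvesterMatrix_eq_transpose_sylvester, Matrix.det_transpose]
  exact Matrix.det_submatrix_equiv_self Fin.revPerm _

theorem disc_eq_of_monic {f : ℤ[X]} (hf : f.Monic) :
    disc f = (-1) ^ (f.natDegree * (f.natDegree - 1) / 2) * resultant f (derivative f) := by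
  rw [disc, hf.leadingCoeff, Int.ediv_one]

theorem exists_aeval_eq_zero_of_resultant_eq_zero {R K : Type*} [CommRing R] [IsDomain R]
    [Field K] [IsAlgClosed K] [Algebra R K] [FaithfulSMul R K] {f g : R[X]}
    (h : Polynomial.resultant f g = 0) : ∃ z : K, aeval z f = 0 ∧ aeval z g = 0 := by
  have hinj := FaithfulSMul.algebraMap_injective R K
  have hK : Polynomial.resultant (f.map (algebraMap R K)) (g.map (algebraMap R K)) = 0 := by
    rw [Polynomial.resultant, natDegree_map_eq_of_injective hinj,
      natDegree_map_eq_of_injective hinj, ← Polynomial.resultant, resultant_map_map, h, map_zero]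
  have hcop := mt (resultant_ne_zero _ _) (not_not.mpr hK)
  rw [isCoprime_iff_aeval_ne_zero_of_isAlgClosed (k := K) K] at hcop
  push Not at hcop
  obtain ⟨z, hf, hg⟩ := hcop
  exact ⟨z, by rwa [aeval_map_algebraMap] at hf, by rwa [aeval_map_algebraMap] at hg⟩

theorem card_filter_disc_add_C_eq_zero_le {W : ℤ[X]} (hW : W.Monic) (hdeg : 0 < W.natDegree)
    (s : Finset ℤ) : #{x ∈ s | disc (W + C x) = 0} ≤ W.natDegree - 1 := by
  classical
  have hW' : derivative W ≠ 0 := derivative_ne_zero.mpr hdeg.ne'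
  let badValues : Finset ℂ := ((derivative W).aroots ℂ).toFinset.image fun z => -aeval z W
  have hmaps : ∀ x ∈ {x ∈ s | disc (W + C x) = 0}, (x : ℂ) ∈ badValues := by
    intro x hx
    have hmonic : (W + C x).Monic :=
      hW.add_of_left (degree_C_le.trans_lt (natDegree_pos_iff_degree_pos.mp hdeg))
    have hres : Polynomial.resultant (W + C x) (derivative W) = 0 := by
      have h := (mem_filter.mp hx).2
      rw [disc_eq_of_monic hmonic, resultant_eq_polynomial_resultant, derivative_add,
        derivative_C, add_zero] at h
      exact (mul_eq_zero.mp h).resolve_left (pow_ne_zero _ (by norm_num))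
    obtain ⟨z, hzW, hzW'⟩ := exists_aeval_eq_zero_of_resultant_eq_zero (K := ℂ) hres
    refine mem_image.mpr ⟨z, Multiset.mem_toFinset.mpr (mem_aroots.mpr ⟨hW', hzW'⟩), ?_⟩
    rw [map_add, aeval_C, algebraMap_int_eq, eq_intCast] at hzW
    linear_combination -hzW
  calc #{x ∈ s | disc (W + C x) = 0}
      ≤ #badValues := card_le_card_of_injOn _ hmaps (Int.cast_injective.injOn)
    _ ≤ Multiset.card ((derivative W).aroots ℂ) :=
        card_image_le.trans (Multiset.toFinset_card_le _)
    _ ≤ (derivative W).natDegree := (card_roots' _).trans natDegree_map_le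
    _ ≤ W.natDegree - 1 := natDegree_derivative_le W

theorem abs_card_filter_dvd_add_sub_le {q : ℤ} (hq : 0 < q) (a b s : ℤ) :
    |(#{x ∈ Icc a b | q ∣ x + s} : ℝ) - #(Icc a b) / q| ≤ 1 := by
  rcases lt_or_ge b a with hba | hab
  · simp [Icc_eq_empty_of_lt hba]
  have hshift : #{x ∈ Icc a b | q ∣ x + s} = #{y ∈ Ioc (a + s - 1) (b + s) | q ∣ y} := by
    refine card_nbij' (· + s) (· - s) ?_ ?_ ?_ ?_ <;> intro x hx <;>
      simp only [coe_filter, Set.mem_ofPred_eq, mem_Icc, mem_Ioc] at hx ⊢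
    · exact ⟨⟨by omega, by omega⟩, hx.2⟩
    · exact ⟨⟨by omega, by omega⟩, by simpa using hx.2⟩
    · omega
    · omega
  set A : ℚ := ((a + s - 1 : ℤ) : ℚ) / q
  set B : ℚ := ((b + s : ℤ) : ℚ) / q
  have hAB : A ≤ B := by
    apply div_le_div_of_nonneg_right _ (by positivity)
    exact_mod_cast (by omega : a + s - 1 ≤ b + s)
  have hcount : (#{x ∈ Icc a b | q ∣ x + s} : ℚ) = ⌊B⌋ - ⌊A⌋ := by
    rw [hshift, ← Int.cast_natCast, Int.Ioc_filter_dvd_card _ _ hq,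
      max_eq_left (sub_nonneg.mpr (Int.floor_mono hAB))]
    push_cast
    rfl
  have hlen : (#(Icc a b) : ℚ) / q = B - A := by
    rw [Int.card_Icc, ← Int.cast_natCast, Int.toNat_of_nonneg (by omega), div_sub_div_same]
    push_cast
    ring
  have hQ : |(#{x ∈ Icc a b | q ∣ x + s} : ℚ) - #(Icc a b) / q| ≤ 1 := by
    rw [hcount, hlen, abs_le]
    constructor <;> linarith [Int.floor_le A, Int.floor_le B, Int.lt_floor_add_one A,
      Int.lt_floor_add_one B]
  exact_mod_cast hQ

theorem abs_card_filter_and_sub_le {α : Type*} (s : Finset α) (P Q : α → Prop) [DecidablePred P]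
    [DecidablePred Q] (a : ℝ) :
    |(#{x ∈ s | P x ∧ Q x} : ℝ) - a| ≤ |(#{x ∈ s | Q x} : ℝ) - a| + #{x ∈ s | ¬P x} := by
  have hsplit : #{x ∈ s | P x ∧ Q x} + #{x ∈ s | ¬P x ∧ Q x} = #{x ∈ s | Q x} := by
    rw [← card_filter_add_card_filter_not (s := {x ∈ s | Q x}) (p := P), filter_filter,
      filter_filter]
    simp only [and_comm]
  have hle : #{x ∈ s | ¬P x ∧ Q x} ≤ #{x ∈ s | ¬P x} :=
    card_le_card fun x hx => by
      simp only [mem_filter] at hx ⊢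
      exact ⟨hx.1, hx.2.1⟩
  have hsplitR : (#{x ∈ s | P x ∧ Q x} : ℝ) + #{x ∈ s | ¬P x ∧ Q x} = #{x ∈ s | Q x} := by
    exact_mod_cast hsplit
  have hleR : (#{x ∈ s | ¬P x ∧ Q x} : ℝ) ≤ #{x ∈ s | ¬P x} := by exact_mod_cast hle
  rw [abs_le]
  constructor <;> linarith [le_abs_self ((#{x ∈ s | Q x} : ℝ) - a),
    neg_abs_le ((#{x ∈ s | Q x} : ℝ) - a), (#{x ∈ s | ¬P x ∧ Q x}).cast_nonneg (α := ℝ)]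

theorem abs_card_filter_disc_ne_zero_dvd_sub_le {W : ℤ[X]} (hW : W.Monic)
    (hdeg : 0 < W.natDegree) {q : ℤ} (hq : 0 < q) (a b r : ℤ) :
    |(#{x ∈ Icc a b | disc (W + C x) ≠ 0 ∧ q ∣ (W + C x).eval r} : ℝ) - #(Icc a b) / q| ≤
      W.natDegree := by
  have hdvd := abs_card_filter_dvd_add_sub_le hq a b (W.eval r)
  have hbad := card_filter_disc_add_C_eq_zero_le hW hdeg (Icc a b)
  have heval : ∀ x, (W + C x).eval r = x + W.eval r := fun x => by rw [eval_add, eval_C, add_comm]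
  simp only [heval]
  calc _ ≤ _ := abs_card_filter_and_sub_le _ _ _ _
    _ ≤ 1 + ((W.natDegree - 1 : ℕ) : ℝ) := by
        gcongr
        simpa only [ne_eq, not_not] using hbad
    _ = W.natDegree := by rw [Nat.cast_sub hdeg]; ring

theorem card_filter_piFinset_succ {β : Type*} {n : ℕ} (S : Fin (n + 1) → Finset β)
    (P : (Fin (n + 1) → β) → Prop) [DecidablePred P] :
    #{r ∈ Fintype.piFinset S | P r} =
      ∑ t ∈ Fintype.piFinset (Fin.tail S), #{x ∈ S 0 | P (Fin.cons x t)} := by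
  have hS : Fintype.piFinset S =
      (S 0 ×ˢ Fintype.piFinset (Fin.tail S)).map (Fin.consEquiv fun _ => β).toEmbedding := by
    simpa using filter_piFinset_eq_map_consEquiv S (fun _ => True)
  rw [hS, filter_map, card_map, card_filter, sum_product_right]
  refine sum_congr rfl fun t _ => ?_
  rw [card_filter]
  rfl

theorem abs_card_filter_piFinset_sub_le {β : Type*} {n : ℕ} (S : Fin (n + 1) → Finset β)
    (P : (Fin (n + 1) → β) → Prop) [DecidablePred P] {a ε : ℝ}
    (h : ∀ t ∈ Fintype.piFinset (Fin.tail S), |(#{x ∈ S 0 | P (Fin.cons x t)} : ℝ) - a| ≤ ε) :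
    |(#{r ∈ Fintype.piFinset S | P r} : ℝ) - a * #(Fintype.piFinset (Fin.tail S))| ≤
      ε * #(Fintype.piFinset (Fin.tail S)) := by
  rw [card_filter_piFinset_succ, Nat.cast_sum, mul_comm a, ← nsmul_eq_mul, ← sum_const,
    ← sum_sub_distrib, mul_comm ε, ← nsmul_eq_mul, ← sum_const]
  exact (abs_sum_le_sum_abs _ _).trans (sum_le_sum h)

theorem monic_monicPoly (d : ℕ) (c : Fin d → ℤ) : (monicPoly d c).Monic :=
  monic_X_pow_add (degree_sum_fin_lt c)

theorem natDegree_monicPoly (d : ℕ) (c : Fin d → ℤ) : (monicPoly d c).natDegree = d := by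
  rw [monicPoly, natDegree_add_eq_left_of_degree_lt, natDegree_X_pow]
  simpa using degree_sum_fin_lt c

theorem monicPoly_cons {n : ℕ} (x : ℤ) (t : Fin n → ℤ) :
    monicPoly (n + 1) (Fin.cons x t) = monicPoly (n + 1) (Fin.cons 0 t) + C x := by
  simp only [monicPoly, Fin.sum_univ_succ, Fin.cons_zero, Fin.cons_succ, map_zero,
    Fin.val_zero, pow_zero, mul_one]
  ring

theorem abs_card_filter_monicPoly_cons_sub_le {n : ℕ} (t : Fin n → ℤ) {q : ℤ} (hq : 0 < q)
    (a b r : ℤ) :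
    |(#{x ∈ Icc a b | disc (monicPoly (n + 1) (Fin.cons x t)) ≠ 0 ∧
        q ∣ (monicPoly (n + 1) (Fin.cons x t)).eval r} : ℝ) - #(Icc a b) / q| ≤ n + 1 := by
  set W := monicPoly (n + 1) (Fin.cons 0 t)
  have hcons : ∀ x, monicPoly (n + 1) (Fin.cons x t) = W + C x := fun x => monicPoly_cons x t
  have hW : W.natDegree = n + 1 := natDegree_monicPoly _ _
  have h := abs_card_filter_disc_ne_zero_dvd_sub_le (W := W) (monic_monicPoly _ _)
    (by omega) hq a b r
  rw [hW] at h
  simp only [hcons]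
  exact_mod_cast h

theorem abs_card_filter_Eset_dvd_eval_sub_le {n : ℕ} (lo hi : Fin (n + 1) → ℤ) {q : ℤ}
    (hq : 0 < q) (r : ℤ) :
    |(#{c ∈ Eset (n + 1) lo hi | q ∣ (monicPoly (n + 1) c).eval r} : ℝ) -
        #(Icc (lo 0) (hi 0)) / q * #(Fintype.piFinset fun i : Fin n => Icc (lo i.succ) (hi i.succ))|
      ≤ (n + 1) * #(Fintype.piFinset fun i : Fin n => Icc (lo i.succ) (hi i.succ)) := by
  rw [Eset, filter_filter]
  exact abs_card_filter_piFinset_sub_le (fun j => Icc (lo j) (hi j)) _ fun t _ =>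
    abs_card_filter_monicPoly_cons_sub_le t hq (lo 0) (hi 0) r

open scoped Classical in
/-- there is an absolute constant `C` such that for all `d, m ≥ 2`, every
tuple of nonempty intervals `I_j ⊆ [−m,m]`, every prime `p`, `k ≥ 1` and integer `r`,
`| #{f ∈ E^{(1)}(m,d,I) : p^k ∣ f(r)} − |I|/p^k | ≤ C·d·|I|/min_j #I_j`. -/
theorem card_root_modpk_approx : ∃ C : ℝ, ∀ d m : ℕ, ∀ hd : 2 ≤ d, 2 ≤ m →
    ∀ lo hi : Fin d → ℤ,
      (∀ j, -(m : ℤ) ≤ lo j ∧ lo j ≤ hi j ∧ hi j ≤ (m : ℤ)) →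
      ∀ p : ℕ, p.Prime → ∀ k : ℕ, 1 ≤ k → ∀ r : ℤ,
      |(((Eset d lo hi).filter fun c => (p : ℤ) ^ k ∣ (monicPoly d c).eval r).card : ℝ) -
          (∏ j : Fin d, ((Finset.Icc (lo j) (hi j)).card : ℝ)) / (p : ℝ) ^ k| ≤
        C * d * (∏ j : Fin d, ((Finset.Icc (lo j) (hi j)).card : ℝ)) /
          ((Finset.univ.inf' ⟨⟨0, by omega⟩, Finset.mem_univ _⟩
            fun j : Fin d => (Finset.Icc (lo j) (hi j)).card : ℕ) : ℝ) := by
  refine ⟨1, fun d m hd _ lo hi hI p hp k _ r => ?_⟩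
  obtain ⟨n, rfl⟩ : ∃ n, d = n + 1 := ⟨d - 1, by omega⟩
  have hbox := abs_card_filter_Eset_dvd_eval_sub_le lo hi
    (pow_pos (Int.natCast_pos.mpr hp.pos) k) r
  set T := #(Fintype.piFinset fun i : Fin n => Icc (lo i.succ) (hi i.succ))
  have hprod : ∏ j, (#(Icc (lo j) (hi j)) : ℝ) = #(Icc (lo 0) (hi 0)) * T := by
    rw [Fin.prod_univ_succ, ← Nat.cast_prod, ← Fintype.card_piFinset]
  set μ := univ.inf' ⟨⟨0, by omega⟩, mem_univ _⟩ fun j : Fin (n + 1) => #(Icc (lo j) (hi j))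
  have hμ : (μ : ℝ) ≤ #(Icc (lo 0) (hi 0)) := by exact_mod_cast inf'_le _ (mem_univ 0)
  have hμpos : (0 : ℝ) < μ := by
    exact_mod_cast (lt_inf'_iff _).mpr fun j _ => card_pos.mpr (nonempty_Icc.mpr (hI j).2.1)
  rw [hprod, le_div_iff₀ hμpos]
  push_cast at hbox ⊢
  rw [div_mul_eq_mul_div] at hbox
  calc _ ≤ ((n : ℝ) + 1) * T * μ := by gcongr
    _ ≤ ((n : ℝ) + 1) * T * #(Icc (lo 0) (hi 0)) := by gcongr
    _ = _ := by ring
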